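/- Let A ⊆ ℝ × ℝ be a nonempty bounded open set and let λ : ℝ → ℝ × ℝ be continuous on [0,1] with λ(0) = λ(1) and with frontier A = λ '' [0,1]. Set a_left = inf of the first coordinates of points of A, a_right = sup of the first coordinates, a_bottom = inf of the second coordinates, a_top = sup of the second coordinates. Then (i) the Lebesgue (area) measure of A is at most (a_right − a_left)·(a_top − a_bottom), and (ii) the ℓ¹-length of λ over [0,1] is at least 2·((a_right − a_left) + (a_top − a_bottom)). -/

import Mathlib

/-!
The bounding box contains `A`, which gives the area bound. Each extreme coordinate of `A` is
attained on the compact closure but, `A` being open, not in `A`; so it is attained on the frontier,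
that is, on the curve. A closed curve through two points travels between them twice, so its
variation in each coordinate is at least twice the width (height) of the box. Finally the ℓ¹
variation dominates the sum of the two coordinate variations: partitions chosen for the two
coordinates merge into one finite set, on which the ℓ¹ variation splits coordinatewise.
-/

open Set MeasureTheory

section Variation

variable {α E F : Type*} [LinearOrder α] [PseudoEMetricSpace E] [PseudoEMetricSpace F]

theorem WithLp.edist_toLp_one_prod (x y : E × F) :
    edist (WithLp.toLp 1 x) (WithLp.toLp 1 y) = edist x.1 y.1 + edist x.2 y.2 := by
  rw [WithLp.prod_edist_eq_add (by norm_num)]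
  simp

theorem eVariationOn_toLp_one_prod_finset (u : α → E × F) (s : Finset α) :
    eVariationOn (fun t => WithLp.toLp 1 (u t)) s =
      eVariationOn (Prod.fst ∘ u) s + eVariationOn (Prod.snd ∘ u) s := by
  classical
  induction s using Finset.induction_on_max with
  | empty => simp [eVariationOn.subsingleton]
  | insert a s hlt ih =>
    rcases s.eq_empty_or_nonempty with rfl | hne
    · simp [eVariationOn.subsingleton]
    have hmax : IsGreatest (s : Set α) (s.max' hne) := s.isGreatest_max' hne
    have hmaxa : s.max' hne ≤ a := (hlt _ (s.max'_mem hne)).le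
    rw [Finset.coe_insert, insert_eq, union_comm]
    simp only [eVariationOn.union' _ hmax isLeast_singleton hmaxa, ih,
      eVariationOn.subsingleton _ subsingleton_singleton, WithLp.edist_toLp_one_prod,
      Function.comp_apply, add_zero]
    ring

theorem eVariationOn_fst_add_snd_le_toLp_one (u : α → E × F) (s : Set α) :
    eVariationOn (Prod.fst ∘ u) s + eVariationOn (Prod.snd ∘ u) s ≤
      eVariationOn (fun t => WithLp.toLp 1 (u t)) s := by
  rcases s.eq_empty_or_nonempty with rfl | hne
  · simp [eVariationOn.subsingleton]
  have := eVariationOn.nonempty_monotone_mem hne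
  refine ENNReal.iSup_add_iSup_le fun ⟨n, v, hv, hvs⟩ ⟨m, w, hw, hws⟩ => ?_
  set T := (((finite_Iic n).image v).union ((finite_Iic m).image w)).toFinset
  have hTs : (T : Set α) ⊆ s := by
    simp only [T, Finite.coe_toFinset, union_subset_iff, image_subset_iff]
    exact ⟨fun i _ => hvs i, fun i _ => hws i⟩
  calc _ ≤ eVariationOn (Prod.fst ∘ u) T + eVariationOn (Prod.snd ∘ u) T := by
        gcongr
        · exact eVariationOn.sum_le_of_monotoneOn_Iic (hv.monotoneOn _) fun i hi => by
            simp only [T, Finite.coe_toFinset]; exact .inl ⟨i, hi, rfl⟩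
        · exact eVariationOn.sum_le_of_monotoneOn_Iic (hw.monotoneOn _) fun i hi => by
            simp only [T, Finite.coe_toFinset]; exact .inr ⟨i, hi, rfl⟩
    _ = eVariationOn (fun t => WithLp.toLp 1 (u t)) T :=
        (eVariationOn_toLp_one_prod_finset u T).symm
    _ ≤ _ := eVariationOn.mono _ hTs

theorem two_mul_edist_le_eVariationOn_Icc {f : α → E} {p q a b : α} (hpq : f p = f q)
    (ha : a ∈ Icc p q) (hb : b ∈ Icc p q) :
    2 * edist (f a) (f b) ≤ eVariationOn f (Icc p q) := by
  wlog hab : a ≤ b generalizing a b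
  · rw [edist_comm]; exact this hb ha (le_of_not_ge hab)
  have hsplit : ∀ {x y z : α}, x ≤ y → y ≤ z →
      eVariationOn f (Icc x y) + eVariationOn f (Icc y z) = eVariationOn f (Icc x z) :=
    fun hxy hyz => by
      rw [← eVariationOn.union f (isGreatest_Icc hxy) (isLeast_Icc hyz),
        Icc_union_Icc_eq_Icc hxy hyz]
  have hedist : ∀ {x y : α}, x ≤ y → edist (f x) (f y) ≤ eVariationOn f (Icc x y) :=
    fun hxy => eVariationOn.edist_le f (left_mem_Icc.2 hxy) (right_mem_Icc.2 hxy)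
  have hloop : edist (f a) (f b) ≤ edist (f p) (f a) + edist (f b) (f q) := by
    calc edist (f a) (f b) ≤ edist (f a) (f q) + edist (f q) (f b) := edist_triangle _ _ _
      _ = edist (f p) (f a) + edist (f b) (f q) := by
        rw [hpq, edist_comm (f a), edist_comm (f q) (f b)]
  calc 2 * edist (f a) (f b) = edist (f a) (f b) + edist (f a) (f b) := two_mul _
    _ ≤ (edist (f p) (f a) + edist (f b) (f q)) + edist (f a) (f b) := by gcongr
    _ ≤ (eVariationOn f (Icc p a) + eVariationOn f (Icc b q)) + eVariationOn f (Icc a b) := by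
        gcongr
        exacts [hedist ha.1, hedist hb.2, hedist hab]
    _ = eVariationOn f (Icc p q) := by
        rw [add_right_comm, add_assoc, hsplit hab hb.2, hsplit ha.1 (hab.trans hb.2)]

end Variation

section Extremum

variable {X : Type*} [TopologicalSpace X] {A : Set X} {g : X → ℝ}

-- an open map has no local maximum, so the maximum over the compact closure lies off `A`
theorem IsOpen.exists_mem_frontier_eq_sSup_image (hA : IsOpen A) (hne : A.Nonempty)
    (hcl : IsCompact (closure A)) (hg : Continuous g) (hgo : IsOpenMap g) :
    ∃ p ∈ frontier A, g p = sSup (g '' A) := by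
  obtain ⟨p, hpcl, hmax⟩ := hcl.exists_isMaxOn hne.closure hg.continuousOn
  have hub : g p ∈ upperBounds (g '' A) := by
    rintro _ ⟨q, hq, rfl⟩; exact hmax (subset_closure hq)
  have hpA : p ∉ A := fun hpA => by
    obtain ⟨y, hpy, ⟨q, hq, rfl⟩⟩ :=
      ((frequently_gt_nhds (g p)).and_eventually ((hgo A hA).mem_nhds ⟨p, hpA, rfl⟩)).exists
    exact (hub ⟨q, hq, rfl⟩).not_gt hpy
  refine ⟨p, hA.frontier_eq ▸ ⟨hpcl, hpA⟩, ((isLUB_of_mem_closure hub ?_).csSup_eq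
    (hne.image g)).symm⟩
  exact image_closure_subset_closure_image hg ⟨p, hpcl, rfl⟩

theorem IsOpen.exists_mem_frontier_eq_sInf_image (hA : IsOpen A) (hne : A.Nonempty)
    (hcl : IsCompact (closure A)) (hg : Continuous g) (hgo : IsOpenMap g) :
    ∃ p ∈ frontier A, g p = sInf (g '' A) := by
  obtain ⟨p, hp, hgp⟩ := hA.exists_mem_frontier_eq_sSup_image hne hcl hg.neg
    ((Homeomorph.neg ℝ).isOpenMap.comp hgo)
  refine ⟨p, hp, ?_⟩
  rw [Real.sInf_def, ← image_neg_eq_neg, image_image]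
  exact neg_eq_iff_eq_neg.1 hgp

end Extremum

theorem volume_le_ofReal_boundingBox {A : Set (ℝ × ℝ)} (hA : Bornology.IsBounded A) :
    volume A ≤ ENNReal.ofReal ((sSup (Prod.fst '' A) - sInf (Prod.fst '' A)) *
      (sSup (Prod.snd '' A) - sInf (Prod.snd '' A))) := by
  have hx := hA.image_fst
  have hy := hA.image_snd
  calc volume A ≤ volume (Icc (sInf (Prod.fst '' A)) (sSup (Prod.fst '' A)) ×ˢ
        Icc (sInf (Prod.snd '' A)) (sSup (Prod.snd '' A))) :=
        measure_mono (subset_fst_image_prod_snd_image.trans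
          (prod_mono hx.subset_Icc_sInf_sSup hy.subset_Icc_sInf_sSup))
    _ = _ := by
        rw [Measure.volume_eq_prod, Measure.prod_prod, Real.volume_Icc, Real.volume_Icc,
          ← ENNReal.ofReal_mul (sub_nonneg.2 (Real.sInf_le_sSup _ hx.bddBelow hx.bddAbove))]

theorem boundingBox_area_and_perimeter
    (A : Set (ℝ × ℝ)) (hne : A.Nonempty) (hbdd : Bornology.IsBounded A)
    (hopen : IsOpen A) (lam : ℝ → ℝ × ℝ)
    (hclosed : lam 0 = lam 1)
    (hfrontier : frontier A = lam '' Set.Icc 0 1) :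
    MeasureTheory.volume A ≤
      ENNReal.ofReal ((sSup (Prod.fst '' A) - sInf (Prod.fst '' A)) *
        (sSup (Prod.snd '' A) - sInf (Prod.snd '' A))) ∧
    ENNReal.ofReal (2 * ((sSup (Prod.fst '' A) - sInf (Prod.fst '' A)) +
        (sSup (Prod.snd '' A) - sInf (Prod.snd '' A)))) ≤
      eVariationOn (fun t => (WithLp.equiv 1 (ℝ × ℝ)).symm (lam t)) (Set.Icc 0 1) := by
  refine ⟨volume_le_ofReal_boundingBox hbdd, ?_⟩
  have hcl : IsCompact (closure A) := hbdd.isCompact_closure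
  obtain ⟨pL, hpL, hxL⟩ :=
    hopen.exists_mem_frontier_eq_sInf_image hne hcl continuous_fst isOpenMap_fst
  obtain ⟨pR, hpR, hxR⟩ :=
    hopen.exists_mem_frontier_eq_sSup_image hne hcl continuous_fst isOpenMap_fst
  obtain ⟨pB, hpB, hyB⟩ :=
    hopen.exists_mem_frontier_eq_sInf_image hne hcl continuous_snd isOpenMap_snd
  obtain ⟨pT, hpT, hyT⟩ :=
    hopen.exists_mem_frontier_eq_sSup_image hne hcl continuous_snd isOpenMap_snd
  rw [hfrontier] at hpL hpR hpB hpT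
  obtain ⟨tL, htL, rfl⟩ := hpL
  obtain ⟨tR, htR, rfl⟩ := hpR
  obtain ⟨tB, htB, rfl⟩ := hpB
  obtain ⟨tT, htT, rfl⟩ := hpT
  have hw := sub_nonneg.2 (Real.sInf_le_sSup _ hbdd.image_fst.bddBelow hbdd.image_fst.bddAbove)
  have hh := sub_nonneg.2 (Real.sInf_le_sSup _ hbdd.image_snd.bddBelow hbdd.image_snd.bddAbove)
  calc _ = 2 * edist (lam tR).1 (lam tL).1 + 2 * edist (lam tT).2 (lam tB).2 := by
        rw [edist_dist, edist_dist, Real.dist_eq, Real.dist_eq, hxL, hxR, hyB, hyT,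
          abs_of_nonneg hw, abs_of_nonneg hh, mul_add, ENNReal.ofReal_add (by positivity)
          (by positivity), ENNReal.ofReal_mul zero_le_two, ENNReal.ofReal_mul zero_le_two,
          ENNReal.ofReal_ofNat]
    _ ≤ eVariationOn (Prod.fst ∘ lam) (Icc 0 1) + eVariationOn (Prod.snd ∘ lam) (Icc 0 1) :=
        add_le_add (two_mul_edist_le_eVariationOn_Icc (congrArg Prod.fst hclosed) htR htL)
          (two_mul_edist_le_eVariationOn_Icc (congrArg Prod.snd hclosed) htT htB)
    _ ≤ _ := eVariationOn_fst_add_snd_le_toLp_one lam _
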